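/- Let Γ be a connected weighted graph of genus g and μ the canonical polarization of degree g-1. If D is a μ-semistable divisor on Γ, then there is at most one acyclic flow φ on Γ such that 2D + Div(φ) = K_Γ. -/

import Mathlib

/-! A common framework for weighted multigraphs, divisors, flows,
subdivisions, pseudo-divisors and specializations, following
"The moduli space of quasistable spin curves". -/

noncomputable section

/-- A finite weighted multigraph (with a reference orientation of each edge). -/
structure WGraph where
  V : Type
  E : Type
  [fintV : Fintype V]
  [decV : DecidableEq V]
  [fintE : Fintype E]
  [decE : DecidableEq E]
  src : E → V
  tgt : E → V
  w : V → ℕ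

namespace WGraph

attribute [instance] WGraph.fintV WGraph.decV WGraph.fintE WGraph.decE

attribute [local instance] Classical.propDecidable

variable (G : WGraph)

/-- Degree of a vertex (loops count twice). -/
def deg (v : G.V) : ℕ :=
  (Finset.univ.filter (fun e => G.src e = v)).card +
    (Finset.univ.filter (fun e => G.tgt e = v)).card

/-- Degree of a vertex in the edge set `A` (loops count twice). -/
def degIn (A : Finset G.E) (v : G.V) : ℕ :=
  (A.filter (fun e => G.src e = v)).card + (A.filter (fun e => G.tgt e = v)).card

/-- Canonical divisor: `K(v) = 2 w(v) - 2 + deg(v)`. -/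
def K (v : G.V) : ℤ := 2 * (G.w v : ℤ) - 2 + (G.deg v : ℤ)

/-- Canonical polarization of degree `g - 1`. -/
def canPol (v : G.V) : ℚ := (G.K v : ℚ) / 2

/-- Oriented edges: `(e, true)` is `src → tgt`, `(e, false)` is the reverse. -/
abbrev OEdge := G.E × Bool

def osrc (oe : G.OEdge) : G.V := if oe.2 then G.src oe.1 else G.tgt oe.1

def otgt (oe : G.OEdge) : G.V := if oe.2 then G.tgt oe.1 else G.src oe.1

/-- A flow is recorded by its values along the reference orientation;
`flowVal` gives its value on an oriented edge. -/
def flowVal (φ : G.E → ℤ) (oe : G.OEdge) : ℤ := if oe.2 then φ oe.1 else -φ oe.1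

/-- The divisor of a flow: `Div(φ)(v) = ∑_{t(e) = v} φ(e)` over oriented edges. -/
def divOf (φ : G.E → ℤ) (v : G.V) : ℤ :=
  (∑ e : G.E, if G.tgt e = v then φ e else 0) -
    ∑ e : G.E, if G.src e = v then φ e else 0

/-- `e` has exactly one endpoint in `W`. -/
def crossing (W : Finset G.V) (e : G.E) : Prop := (G.src e ∈ W) ≠ (G.tgt e ∈ W)

/-- Number of edges between `W` and its complement. -/
def delta (W : Finset G.V) : ℕ := (Finset.univ.filter (fun e => G.crossing W e)).card

/-- `β_D(W) = deg(D|_W) - μ(W) + δ_W / 2`. -/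
def beta (μ : G.V → ℚ) (D : G.V → ℤ) (W : Finset G.V) : ℚ :=
  (∑ v ∈ W, (D v : ℚ)) - (∑ v ∈ W, μ v) + (G.delta W : ℚ) / 2

def Semistable (μ : G.V → ℚ) (D : G.V → ℤ) : Prop :=
  ∀ W : Finset G.V, W ≠ Finset.univ → 0 ≤ G.beta μ D W

def Stable (μ : G.V → ℚ) (D : G.V → ℤ) : Prop :=
  ∀ W : Finset G.V, W ≠ Finset.univ → W.Nonempty → 0 < G.beta μ D W

def Quasistable (μ : G.V → ℚ) (v₀ : G.V) (D : G.V → ℤ) : Prop :=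
  ∀ W : Finset G.V, W ≠ Finset.univ →
    (0 ≤ G.beta μ D W ∧ (v₀ ∈ W → 0 < G.beta μ D W))

/-- An oriented cycle: a nonempty cyclically closed chain of oriented edges,
with pairwise distinct underlying edges and pairwise distinct vertices. -/
def IsOrientedCycle (c : List G.OEdge) : Prop :=
  c ≠ [] ∧ (c.map Prod.fst).Nodup ∧ (c.map G.osrc).Nodup ∧
    ∀ i : Fin c.length,
      G.otgt (c.get i) = G.osrc (c.get ⟨((i : ℕ) + 1) % c.length, Nat.mod_lt _ i.pos⟩)

/-- A flow is acyclic if there is no oriented cycle on which it is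
nonnegative and somewhere positive. -/
def Acyclic (φ : G.E → ℤ) : Prop :=
  ¬∃ c : List G.OEdge, G.IsOrientedCycle c ∧ (∀ oe ∈ c, 0 ≤ G.flowVal φ oe) ∧
      ∃ oe ∈ c, 0 < G.flowVal φ oe

/-- Adjacency through an edge of `A`. -/
def adjVia (A : Finset G.E) (a b : G.V) : Prop :=
  ∃ e ∈ A, (G.src e = a ∧ G.tgt e = b) ∨ (G.src e = b ∧ G.tgt e = a)

/-- Reachability using only edges of `A`. -/
def ReachVia (A : Finset G.E) : G.V → G.V → Prop := Relation.ReflTransGen (G.adjVia A)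

def Connected : Prop := Nonempty G.V ∧ ∀ u v : G.V, G.ReachVia Finset.univ u v

/-- A cyclic subgraph: a set of edges in which every vertex has even degree. -/
def IsCyclicSubgraph (P : Finset G.E) : Prop := ∀ v : G.V, Even (G.degIn P v)

/-- The characteristic flow of a vertex. -/
def charFlow (v₀ : G.V) (e : G.E) : ℤ :=
  if G.src e = v₀ ∧ G.tgt e ≠ v₀ then 1
  else if G.tgt e = v₀ ∧ G.src e ≠ v₀ then -1 else 0

/-- `Div(v₀)`, the principal divisor attached to a vertex. -/
def DivV (v₀ : G.V) : G.V → ℤ := G.divOf (G.charFlow v₀)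

/-- Principal divisors are integer combinations of the `Div(v)`. -/
def Principal (D : G.V → ℤ) : Prop :=
  ∃ a : G.V → ℤ, ∀ v, D v = ∑ u : G.V, a u * G.DivV u v

/-- Number of connected components of the subgraph with all vertices and
edge set `A`. -/
def numComponents (A : Finset G.E) : ℕ :=
  (Finset.univ.image (fun v => Finset.univ.filter (fun u => G.ReachVia A v u))).card

/-- The subdivision `Γ^S`: one exceptional vertex inserted in each edge of `S`. -/
def subdiv (S : Finset G.E) : WGraph where
  V := G.V ⊕ {e // e ∈ S}
  E := {e // e ∉ S} ⊕ {e // e ∈ S} × Bool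
  src := fun x =>
    match x with
    | .inl e => .inl (G.src e.1)
    | .inr (e, b) => if b then .inr e else .inl (G.src e.1)
  tgt := fun x =>
    match x with
    | .inl e => .inl (G.tgt e.1)
    | .inr (e, b) => if b then .inl (G.tgt e.1) else .inr e
  w := fun v =>
    match v with
    | .inl v => G.w v
    | .inr _ => 0

/-- A pseudo-divisor: value `-1` on every exceptional vertex. -/
def IsPseudoDivisor (S : Finset G.E) (D : (G.subdiv S).V → ℤ) : Prop :=
  ∀ x : {e // e ∈ S}, D (Sum.inr x) = -1

/-- A pseudo-root: `2 D + Div(φ) = K_{Γ^S}` for some acyclic flow `φ` on `Γ^S`. -/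
def IsPseudoRoot (S : Finset G.E) (D : (G.subdiv S).V → ℤ) : Prop :=
  G.IsPseudoDivisor S D ∧
    ∃ φ : (G.subdiv S).E → ℤ, (G.subdiv S).Acyclic φ ∧
      ∀ v, 2 * D v + (G.subdiv S).divOf φ v = (G.subdiv S).K v

/-- Semistability of a pseudo-divisor: semistability on the subdivision with
respect to the (extended) canonical polarization. -/
def IsSemistablePR (S : Finset G.E) (D : (G.subdiv S).V → ℤ) : Prop :=
  (G.subdiv S).Semistable (G.subdiv S).canPol D

/-- `β_{E,D}` for pseudo-divisors, on subsets of the original vertices. -/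
def betaPoly (S : Finset G.E) (D : (G.subdiv S).V → ℤ) (W : Finset G.V) : ℚ :=
  (∑ v ∈ W, (D (Sum.inl v) : ℚ)) -
    (∑ v ∈ W, (G.canPol v + (G.degIn S v : ℚ) / 2)) +
    ((Finset.univ.filter (fun e => e ∉ S ∧ G.crossing W e)).card : ℚ) / 2

/-- Polystability of a pseudo-divisor. -/
def IsPolystable (S : Finset G.E) (D : (G.subdiv S).V → ℤ) : Prop :=
  ∀ W : Finset G.V,
    0 ≤ G.betaPoly S D W ∧ ((∃ e, e ∉ S ∧ G.crossing W e) → 0 < G.betaPoly S D W)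

/-- The divisor `D_P` attached to a cyclic subgraph `P`, on `Γ^{E_P}` with
`E_P = Pᶜ`. -/
def DP (P : Finset G.E) : (G.subdiv Pᶜ).V → ℤ := fun x =>
  match x with
  | .inl v => (G.deg v : ℤ) - (G.degIn P v : ℤ) / 2 - 1 + (G.w v : ℤ)
  | .inr _ => -1

/-- The data of a semistable root-graph together with its acyclic flow. -/
def IsSemistableRootTriple (S : Finset G.E) (D : (G.subdiv S).V → ℤ)
    (φ : (G.subdiv S).E → ℤ) : Prop :=
  G.IsPseudoDivisor S D ∧ G.IsSemistablePR S D ∧ (G.subdiv S).Acyclic φ ∧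
    ∀ v, 2 * D v + (G.subdiv S).divOf φ v = (G.subdiv S).K v

/-- The induced subgraph on a vertex set `W`. -/
def induce (W : Finset G.V) : WGraph where
  V := {v // v ∈ W}
  E := {e // G.src e ∈ W ∧ G.tgt e ∈ W}
  src := fun e => ⟨G.src e.1, e.2.1⟩
  tgt := fun e => ⟨G.tgt e.1, e.2.2⟩
  w := fun v => G.w v.1

/-- Number of edges between `W` and `Wᶜ` incident to `v`. -/
def degCross (W : Finset G.V) (v : G.V) : ℕ :=
  (Finset.univ.filter (fun e => G.src e = v ∧ G.crossing W e)).card +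
    (Finset.univ.filter (fun e => G.tgt e = v ∧ G.crossing W e)).card

/-- A specialization (iterated edge contraction) of weighted graphs. -/
structure Spec (G G' : WGraph) where
  vmap : G.V → G'.V
  emap : G'.E → G.E
  emap_inj : Function.Injective emap
  vmap_surj : Function.Surjective vmap
  src_comm : ∀ e', vmap (G.src (emap e')) = G'.src e'
  tgt_comm : ∀ e', vmap (G.tgt (emap e')) = G'.tgt e'
  contract_eq : ∀ e : G.E, e ∉ Finset.univ.image emap → vmap (G.src e) = vmap (G.tgt e)
  fiber_conn : ∀ u v : G.V, vmap u = vmap v →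
    Relation.ReflTransGen
      (fun a b => ∃ e, e ∉ Finset.univ.image emap ∧
        ((G.src e = a ∧ G.tgt e = b) ∨ (G.src e = b ∧ G.tgt e = a))) u v
  weight_eq : ∀ v' : G'.V,
    (G'.w v' : ℤ) =
      (∑ v ∈ Finset.univ.filter (fun v => vmap v = v'), (G.w v : ℤ)) +
        ((Finset.univ.filter (fun e : G.E =>
            e ∉ Finset.univ.image emap ∧ vmap (G.src e) = v')).card : ℤ) -
        ((Finset.univ.filter (fun v : G.V => vmap v = v')).card : ℤ) + 1

/-- Pushforward of a divisor along a specialization. -/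
def Spec.pushDiv {G G' : WGraph} (σ : Spec G G') (D : G.V → ℤ) : G'.V → ℤ :=
  fun v' => ∑ v ∈ Finset.univ.filter (fun v => σ.vmap v = v'), D v

/-- Pushforward of a polarization along a specialization. -/
def Spec.pushPol {G G' : WGraph} (σ : Spec G G') (μ : G.V → ℚ) : G'.V → ℚ :=
  fun v' => ∑ v ∈ Finset.univ.filter (fun v => σ.vmap v = v'), μ v

/-- The induced map on vertices of subdivisions. -/
def Spec.subdivVmap {G G' : WGraph} (σ : Spec G G') (S : Finset G.E)
    (S' : Finset G'.E) : (G.subdiv S).V → (G'.subdiv S').V := fun x =>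
  match x with
  | .inl v => .inl (σ.vmap v)
  | .inr e =>
    if h : ∃ e' : {e' // e' ∈ S'}, σ.emap e'.1 = e.1 then .inr h.choose
    else .inl (σ.vmap (G.src e.1))

/-- Pushforward of a pseudo-divisor (its divisor part) along a specialization. -/
def Spec.pushSubdivDiv {G G' : WGraph} (σ : Spec G G') (S : Finset G.E)
    (S' : Finset G'.E) (D : (G.subdiv S).V → ℤ) : (G'.subdiv S').V → ℤ := fun y =>
  ∑ x ∈ Finset.univ.filter (fun x => σ.subdivVmap S S' x = y), D x

/-- Extension by zero along the edge injection of a specialization. -/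
def Spec.extendBy {G G' : WGraph} (σ : Spec G G') (x : G'.E → ℝ) : G.E → ℝ :=
  fun e => if h : ∃ e', σ.emap e' = e then x h.choose else 0

/-- Same-graph contraction of subdivisions (for `S ⊆ S'`): the vertex map.
`σb e` selects the endpoint to which the exceptional vertex of a contracted
edge `e ∈ S' \ S` is merged (`true` = target, `false` = source). -/
def contrVmap (S S' : Finset G.E) (σb : G.E → Bool) :
    (G.subdiv S').V → (G.subdiv S).V := fun x =>
  match x with
  | .inl v => .inl v
  | .inr e =>
    if h : e.1 ∈ S then .inr ⟨e.1, h⟩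
    else .inl (if σb e.1 then G.tgt e.1 else G.src e.1)

/-- Same-graph contraction of subdivisions: the edge injection. -/
def contrEmap (S S' : Finset G.E) (hSS : S ⊆ S') (σb : G.E → Bool) :
    (G.subdiv S).E → (G.subdiv S').E := fun x =>
  match x with
  | .inl e =>
    if h : e.1 ∈ S' then .inr (⟨e.1, h⟩, !σb e.1) else .inl ⟨e.1, h⟩
  | .inr eb => .inr (⟨eb.1.1, hSS eb.1.2⟩, eb.2)

/-- Specialization of pseudo-divisors over a fixed graph. -/
def PDSpec (S' : Finset G.E) (D' : (G.subdiv S').V → ℤ) (S : Finset G.E)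
    (D : (G.subdiv S).V → ℤ) : Prop :=
  S ⊆ S' ∧ ∃ σb : G.E → Bool,
    ∀ v, D v = ∑ x ∈ Finset.univ.filter (fun x => G.contrVmap S S' σb x = v), D' x

/-- Specialization of semistable root-graphs over a fixed graph: a
specialization of pseudo-divisors pushing the acyclic flow forward. -/
def RootSpec (S' : Finset G.E) (D' : (G.subdiv S').V → ℤ) (S : Finset G.E)
    (D : (G.subdiv S).V → ℤ) : Prop :=
  ∃ hSS : S ⊆ S', ∃ σb : G.E → Bool,
    (∀ v, D v = ∑ x ∈ Finset.univ.filter (fun x => G.contrVmap S S' σb x = v), D' x) ∧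
    ∀ φ' φ : _, (G.subdiv S').Acyclic φ' →
      (∀ v, 2 * D' v + (G.subdiv S').divOf φ' v = (G.subdiv S').K v) →
      (G.subdiv S).Acyclic φ →
      (∀ v, 2 * D v + (G.subdiv S).divOf φ v = (G.subdiv S).K v) →
      ∀ x, φ x = φ' (G.contrEmap S S' hSS σb x)

/-- Underlying edge of `Γ` of an edge of `Γ^S`. -/
def underE (S : Finset G.E) : (G.subdiv S).E → G.E := fun x =>
  match x with
  | .inl e => e.1
  | .inr eb => eb.1.1

/-- A specialization of triples `(Γ, E, D) ≥ (Γ', E', D')`. -/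
structure TripleSpec (G : WGraph) (S : Finset G.E) (D : (G.subdiv S).V → ℤ)
    (G' : WGraph) (S' : Finset G'.E) (D' : (G'.subdiv S').V → ℤ) where
  base : Spec G G'
  sub : Spec (G.subdiv S) (G'.subdiv S')
  vcomm : ∀ v : G.V, sub.vmap (Sum.inl v) = Sum.inl (base.vmap v)
  ecomm : ∀ x : (G'.subdiv S').E, G.underE S (sub.emap x) = base.emap (G'.underE S' x)
  edges_sub : ∀ e' ∈ S', base.emap e' ∈ S
  push_eq : ∀ y, D' y = ∑ x ∈ Finset.univ.filter (fun x => sub.vmap x = y), D x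

/-- A triple specialization is a specialization of root-graphs when it pushes
the (unique) acyclic flows forward. -/
def TripleSpec.IsRootSpec {G : WGraph} {S : Finset G.E} {D : (G.subdiv S).V → ℤ}
    {G' : WGraph} {S' : Finset G'.E} {D' : (G'.subdiv S').V → ℤ}
    (T : TripleSpec G S D G' S' D') : Prop :=
  ∀ φ φ', (G.subdiv S).Acyclic φ →
    (∀ v, 2 * D v + (G.subdiv S).divOf φ v = (G.subdiv S).K v) →
    (G'.subdiv S').Acyclic φ' →
    (∀ v, 2 * D' v + (G'.subdiv S').divOf φ' v = (G'.subdiv S').K v) →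
    ∀ x, φ' x = φ (T.sub.emap x)

/-- The cone `λ` attached to a flow: nonnegative orthant cut by the cycle
equations. -/
def lambdaSet (φ : G.E → ℤ) : Set (G.E → ℝ) :=
  {x | (∀ e, 0 ≤ x e) ∧ ∀ c : List G.OEdge, G.IsOrientedCycle c →
      ((c.map (fun oe => (G.flowVal φ oe : ℝ) * x oe.1)).sum) = 0}

/-- Its relative interior (intersection with the positive orthant). -/
def lambdaInt (φ : G.E → ℤ) : Set (G.E → ℝ) :=
  {x | (∀ e, 0 < x e) ∧ ∀ c : List G.OEdge, G.IsOrientedCycle c →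
      ((c.map (fun oe => (G.flowVal φ oe : ℝ) * x oe.1)).sum) = 0}

/-- Faces of a cone (supporting-hyperplane definition). -/
def IsFaceOf (F C : Set (G.E → ℝ)) : Prop :=
  F = C ∨ ∃ l : (G.E → ℝ) →ₗ[ℝ] ℝ, (∀ x ∈ C, 0 ≤ l x) ∧ F = C ∩ {x | l x = 0}

/-- Facets: faces of codimension one. -/
def IsFacetOf (F C : Set (G.E → ℝ)) : Prop :=
  G.IsFaceOf F C ∧
    Module.finrank ℝ (Submodule.span ℝ F) + 1 = Module.finrank ℝ (Submodule.span ℝ C)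

/-- The vector `u_V` spanning the subspace `L_E`. -/
def uVec (S : Finset G.E) (W : Finset G.V) : (G.subdiv S).E → ℝ := fun x =>
  match x with
  | .inl _ => 0
  | .inr eb =>
    if G.crossing W eb.1.1 then
      (if (if eb.2 then G.tgt eb.1.1 else G.src eb.1.1) ∈ W then 1 else -1)
    else 0

/-- The subspace `L_E ⊆ ℝ^{E(Γ^S)}`. -/
def LSub (S : Finset G.E) : Submodule ℝ ((G.subdiv S).E → ℝ) :=
  Submodule.span ℝ {u | ∃ W : Finset G.V, (∀ e, G.crossing W e → e ∈ S) ∧ u = G.uVec S W}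

/-- The diagonal map `δ_E : ℝ^{E(Γ)} → ℝ^{E(Γ^S)}`. -/
def deltaMap (S : Finset G.E) (x : G.E → ℝ) : (G.subdiv S).E → ℝ := fun e' =>
  match e' with
  | .inl e => x e.1
  | .inr eb => x eb.1.1

/-- One step of a `φ`-path avoiding the edges of `A`. -/
def phiStep (φ : G.E → ℤ) (A : Finset G.E) (a b : G.V) : Prop :=
  ∃ oe : G.OEdge, oe.1 ∉ A ∧ 0 ≤ G.flowVal φ oe ∧ G.osrc oe = a ∧ G.otgt oe = b

/-- Reachability by `φ`-paths avoiding the edges of `A`. -/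
def PhiReach (φ : G.E → ℤ) (A : Finset G.E) : G.V → G.V → Prop :=
  Relation.ReflTransGen (G.phiStep φ A)

/-- The refinement of `Γ` inserting `m e` vertices in the interior of each
edge `e`. -/
def refine (m : G.E → ℕ) : WGraph where
  V := G.V ⊕ (Σ e : G.E, Fin (m e))
  E := Σ e : G.E, Fin (m e + 1)
  src := fun x =>
    if h : (x.2 : ℕ) = 0 then .inl (G.src x.1)
    else .inr ⟨x.1, ⟨(x.2 : ℕ) - 1, by have := x.2.isLt; omega⟩⟩
  tgt := fun x =>
    if h : (x.2 : ℕ) = m x.1 then .inl (G.tgt x.1)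
    else .inr ⟨x.1, ⟨(x.2 : ℕ), by have := x.2.isLt; omega⟩⟩
  w := fun v =>
    match v with
    | .inl v => G.w v
    | .inr _ => 0

end WGraph

attribute [local instance] Classical.propDecidable

/-! The difference `ψ = φ₁ - φ₂` of two such flows is divergence-free, so if it is nonzero it is
positive along some oriented cycle `γ`. Semistability forces every such flow `φ` to take values
in `{-1, 0, 1}`: if `φ(x) ≥ 2`, the set `W` of vertices reached from the head of `x` along
edges with `φ ≥ 0` misses the tail of `x` by acyclicity, so every edge of the cut carries
flow at least `1` into `W` and `x` carries `2`; then `∑_W Div φ = ∑_W (K - 2D)` exceeds `δ_W`,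
against `β_D(W) ≥ 0`. Hence `φ₁ ≥ 1 + φ₂ ≥ 0` on `γ`, acyclicity of `φ₁` forces `φ₁ = 0`
on `γ`, and then `φ₂ ≤ -1` on `γ`, so `γ` traversed backwards is a positive cycle of `φ₂`. -/

lemma Nat.add_one_mod_eq_ite {i n : ℕ} (h : i < n) :
    (i + 1) % n = if i + 1 = n then 0 else i + 1 := by
  split_ifs with hn
  · rw [hn, Nat.mod_self]
  · exact Nat.mod_eq_of_lt (by omega)

namespace WGraph

open Finset Relation

variable {G : WGraph}

def rev (G : WGraph) (x : G.OEdge) : G.OEdge := (x.1, !x.2)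

@[simp] lemma osrc_rev (x : G.OEdge) : G.osrc (G.rev x) = G.otgt x := by
  cases x with | mk e b => cases b <;> rfl

@[simp] lemma otgt_rev (x : G.OEdge) : G.otgt (G.rev x) = G.osrc x := by
  cases x with | mk e b => cases b <;> rfl

@[simp] lemma flowVal_rev (φ : G.E → ℤ) (x : G.OEdge) :
    G.flowVal φ (G.rev x) = -G.flowVal φ x := by
  cases x with | mk e b => cases b <;> simp [rev, flowVal]

lemma flowVal_sub (φ ψ : G.E → ℤ) (x : G.OEdge) :
    G.flowVal (φ - ψ) x = G.flowVal φ x - G.flowVal ψ x := by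
  cases x with | mk e b => cases b <;> simp [flowVal]; ring

lemma divOf_sub (φ ψ : G.E → ℤ) (v : G.V) :
    G.divOf (φ - ψ) v = G.divOf φ v - G.divOf ψ v := by
  simp only [divOf, ← Finset.sum_filter, Pi.sub_apply, Finset.sum_sub_distrib]
  ring

lemma exists_one_le_flowVal {φ : G.E → ℤ} {e : G.E} (he : φ e ≠ 0) :
    ∃ x : G.OEdge, 1 ≤ G.flowVal φ x := by
  rcases he.lt_or_gt with h | h
  · exact ⟨(e, false), by simp [flowVal]; omega⟩
  · exact ⟨(e, true), by simp [flowVal]; omega⟩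

def IsWalk (G : WGraph) : List G.OEdge → G.V → G.V → Prop
  | [], b, a => b = a
  | x :: p, b, a => G.osrc x = b ∧ G.IsWalk p (G.otgt x) a

lemma IsWalk.drop {p : List G.OEdge} {b a : G.V} (hp : G.IsWalk p b a) {k : ℕ}
    (hk : k < p.length) : G.IsWalk (p.drop k) (G.osrc p[k]) a := by
  induction p generalizing b k with
  | nil => simp at hk
  | cons x p ih =>
    cases k with
    | zero => exact ⟨rfl, hp.2⟩
    | succ k => exact ih hp.2 (by simpa using hk)

lemma IsWalk.otgt_getElem {p : List G.OEdge} {b a : G.V} (hp : G.IsWalk p b a) {i : ℕ}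
    (hi : i < p.length) :
    G.otgt p[i] = if h : i + 1 < p.length then G.osrc p[i + 1] else a := by
  induction p generalizing b i with
  | nil => simp at hi
  | cons x p ih =>
    cases i with
    | zero =>
      cases p with
      | nil => exact hp.2
      | cons y q => simpa using hp.2.1.symm
    | succ i => simpa using ih hp.2 (by simpa using hi)

def FlowStep (G : WGraph) (φ : G.E → ℤ) (t : ℤ) (u v : G.V) : Prop :=
  ∃ x : G.OEdge, t ≤ G.flowVal φ x ∧ G.osrc x = u ∧ G.otgt x = v

def FlowReach (G : WGraph) (φ : G.E → ℤ) (t : ℤ) : G.V → G.V → Prop :=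
  ReflTransGen (G.FlowStep φ t)

lemma FlowReach.exists_walk {φ : G.E → ℤ} {t : ℤ} {b a : G.V} (h : G.FlowReach φ t b a) :
    ∃ p : List G.OEdge, G.IsWalk p b a ∧ (p.map G.osrc).Nodup ∧ a ∉ p.map G.osrc ∧
      ∀ x ∈ p, t ≤ G.flowVal φ x := by
  induction h using ReflTransGen.head_induction_on with
  | refl => exact ⟨[], rfl, List.nodup_nil, List.not_mem_nil, by simp⟩
  | head hstep _ ih =>
    obtain ⟨x, hx, rfl, rfl⟩ := hstep
    obtain ⟨p, hp, hnd, ha, hflow⟩ := ih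
    by_cases hba : G.osrc x = a
    · exact ⟨[], hba, List.nodup_nil, List.not_mem_nil, by simp⟩
    by_cases hb : G.osrc x ∈ p.map G.osrc
    · obtain ⟨k, hk, hkb⟩ := List.mem_iff_getElem.mp hb
      rw [List.length_map] at hk
      rw [List.getElem_map] at hkb
      refine ⟨p.drop k, hkb ▸ hp.drop hk, ?_, ?_, fun y hy => hflow y (List.mem_of_mem_drop hy)⟩
      · rw [List.map_drop]; exact hnd.sublist (List.drop_sublist _ _)
      · rw [List.map_drop]; exact fun h => ha (List.mem_of_mem_drop h)
    · refine ⟨x :: p, ⟨rfl, hp⟩, List.nodup_cons.mpr ⟨hb, hnd⟩, ?_, ?_⟩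
      · simp only [List.map_cons, List.mem_cons, not_or]; exact ⟨Ne.symm hba, ha⟩
      · simpa [hx] using hflow

lemma IsWalk.otgt_getElem_mod {L : List G.OEdge} {b : G.V} (hL : G.IsWalk L b b) {i : ℕ}
    (hi : i < L.length) :
    G.otgt L[i] = G.osrc (L[(i + 1) % L.length]'(Nat.mod_lt _ (by omega))) := by
  rw [hL.otgt_getElem hi]
  simp only [Nat.add_one_mod_eq_ite hi]
  split_ifs with h h'
  · omega
  · rfl
  · cases L with
    | nil => simp at hi
    | cons y q => exact hL.1.symm
  · omega

lemma isOrientedCycle_cons {φ : G.E → ℤ} {x : G.OEdge} {p : List G.OEdge}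
    (hp : G.IsWalk p (G.otgt x) (G.osrc x)) (hv : ((x :: p).map G.osrc).Nodup)
    (hflow : ∀ y ∈ p, 0 ≤ G.flowVal φ y) (hx : 0 < G.flowVal φ x) :
    G.IsOrientedCycle (x :: p) := by
  set L := x :: p with hL
  have hn : 0 < L.length := List.length_pos_of_ne_nil (List.cons_ne_nil _ _)
  have hw : G.IsWalk L (G.osrc x) (G.osrc x) := And.intro rfl hp
  have hadj : ∀ (i : ℕ) (hi : i < L.length),
      G.otgt L[i] = G.osrc (L[(i + 1) % L.length]'(Nat.mod_lt _ hn)) :=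
    fun _ hi => hw.otgt_getElem_mod hi
  have hsrc_inj : ∀ {i j : ℕ} (hi : i < L.length) (hj : j < L.length),
      G.osrc L[i] = G.osrc L[j] → i = j := fun hi hj h =>
    (hv.getElem_inj_iff (hi := by simpa using hi) (hj := by simpa using hj)).mp (by simpa using h)
  have hnonneg : ∀ y ∈ L, 0 ≤ G.flowVal φ y := by
    simpa [hL, hx.le] using hflow
  refine ⟨List.cons_ne_nil _ _, ?_, hv, fun i => by simpa using hadj i i.2⟩
  rw [List.nodup_iff_injective_getElem]
  rintro ⟨i, hi⟩ ⟨j, hj⟩ hij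
  simp only [List.getElem_map, List.length_map] at hij hi hj
  simp only [Fin.mk.injEq]
  by_cases hb : L[i].2 = L[j].2
  · exact hsrc_inj hi hj (congrArg G.osrc (Prod.ext hij hb))
  -- the same edge traversed in both directions forces a closed walk of length two through `x`
  have hrev : L[j] = G.rev L[i] :=
    Prod.ext hij.symm (by simpa [rev, Bool.eq_not_iff] using Ne.symm hb)
  have hji : j = (i + 1) % L.length :=
    hsrc_inj hj (Nat.mod_lt _ hn) (by rw [hrev, osrc_rev, hadj i hi])
  have hij' : i = (j + 1) % L.length :=
    hsrc_inj hi (Nat.mod_lt _ hn) (by rw [← hadj j hj, hrev, otgt_rev])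
  have hzero : G.flowVal φ L[i] = 0 := by
    have h1 := hnonneg _ (List.getElem_mem hi)
    have h2 := hnonneg _ (List.getElem_mem hj)
    rw [hrev, flowVal_rev] at h2
    omega
  rw [Nat.add_one_mod_eq_ite hi] at hji
  rw [Nat.add_one_mod_eq_ite hj] at hij'
  have : i = 0 ∨ j = 0 := by split_ifs at hji hij' <;> omega
  rcases this with rfl | rfl
  · exact absurd hzero hx.ne'
  · have : G.flowVal φ x = -G.flowVal φ L[i] := by rw [← flowVal_rev, ← hrev]; rfl
    omega

lemma exists_cycle_of_flowReach {φ : G.E → ℤ} {t : ℤ} {x : G.OEdge} (ht : 0 ≤ t)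
    (hxt : t ≤ G.flowVal φ x) (hx : 0 < G.flowVal φ x)
    (h : G.FlowReach φ t (G.otgt x) (G.osrc x)) :
    ∃ γ, G.IsOrientedCycle γ ∧ x ∈ γ ∧ ∀ y ∈ γ, t ≤ G.flowVal φ y := by
  obtain ⟨p, hp, hnd, hx_src, hflow⟩ := h.exists_walk
  refine ⟨x :: p, isOrientedCycle_cons hp (List.nodup_cons.mpr ⟨hx_src, hnd⟩)
    (fun y hy => ht.trans (hflow y hy)) hx, List.mem_cons_self, ?_⟩
  simpa [hxt] using hflow

lemma Acyclic.not_flowReach {φ : G.E → ℤ} (h : G.Acyclic φ) {x : G.OEdge}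
    (hx : 0 < G.flowVal φ x) : ¬ G.FlowReach φ 0 (G.otgt x) (G.osrc x) := fun hr => by
  obtain ⟨γ, hγ, hxγ, hflow⟩ := exists_cycle_of_flowReach le_rfl hx.le hx hr
  exact h ⟨γ, hγ, hflow, x, hxγ, hx⟩

lemma IsOrientedCycle.forall_osrc {γ : List G.OEdge} (hγ : G.IsOrientedCycle γ)
    {R : G.V → Prop} (hR : ∀ y ∈ γ, R (G.osrc y) → R (G.otgt y)) {x : G.OEdge} (hx : x ∈ γ)
    (h : R (G.otgt x)) : ∀ y ∈ γ, R (G.osrc y) := by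
  obtain ⟨hne, -, -, hadj⟩ := hγ
  set n := γ.length
  have hn : 0 < n := List.length_pos_of_ne_nil hne
  have hadj' : ∀ i (hi : i < n), G.otgt γ[i] = G.osrc (γ[(i + 1) % n]'(Nat.mod_lt _ hn)) :=
    fun i hi => by simpa using hadj ⟨i, hi⟩
  obtain ⟨i, hi, rfl⟩ := List.mem_iff_getElem.mp hx
  have hstep : ∀ k, R (G.osrc (γ[(i + 1 + k) % n]'(Nat.mod_lt _ hn))) := by
    intro k
    induction k with
    | zero => simpa [← hadj' i hi] using h
    | succ k ih =>
      have := hR _ (List.getElem_mem _) ih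
      have hk : ((i + 1 + k) % n + 1) % n = (i + 1 + (k + 1)) % n := by
        rw [Nat.mod_add_mod, Nat.add_assoc]
      rw [hadj' _ (Nat.mod_lt _ hn)] at this
      simpa only [hk] using this
  intro y hy
  obtain ⟨j, hj, rfl⟩ := List.mem_iff_getElem.mp hy
  have hj' : (i + 1 + (j + n - (i + 1))) % n = j := by
    rw [show i + 1 + (j + n - (i + 1)) = j + n by omega, Nat.add_mod_right, Nat.mod_eq_of_lt hj]
  simpa only [hj'] using hstep (j + n - (i + 1))

lemma Acyclic.not_exists_negative_cycle {φ : G.E → ℤ} (h : G.Acyclic φ) :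
    ¬ ∃ γ, G.IsOrientedCycle γ ∧ (∀ x ∈ γ, G.flowVal φ x ≤ 0) ∧ ∃ x ∈ γ, G.flowVal φ x < 0 := by
  rintro ⟨γ, hγ, hle, x, hxγ, hx⟩
  -- walking backwards along `γ` is a nonnegative path, so it would lead back from `otgt x` to
  -- `osrc x`, against the positive reversed edge `rev x`
  have hback : ∀ y ∈ γ, ¬ G.FlowReach φ 0 (G.osrc x) (G.osrc y) →
      ¬ G.FlowReach φ 0 (G.osrc x) (G.otgt y) := fun y hy hr hr' =>
    hr (hr'.tail ⟨G.rev y, by simpa using hle y hy, by simp, by simp⟩)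
  have hx_rev : ¬ G.FlowReach φ 0 (G.osrc x) (G.otgt x) := by
    simpa using h.not_flowReach (x := G.rev x) (by simpa using hx)
  exact hγ.forall_osrc (R := fun v => ¬ G.FlowReach φ 0 (G.osrc x) v) hback hxγ hx_rev x hxγ
    ReflTransGen.refl

def inflow (G : WGraph) (φ : G.E → ℤ) (W : Finset G.V) (e : G.E) : ℤ :=
  if G.tgt e ∈ W then φ e else -φ e

lemma sum_divOf_eq_sum_inflow (φ : G.E → ℤ) (W : Finset G.V) :
    ∑ v ∈ W, G.divOf φ v = ∑ e ∈ univ.filter (fun e => G.crossing W e), G.inflow φ W e := by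
  have hsum : ∑ v ∈ W, G.divOf φ v =
      ∑ e, ((if G.tgt e ∈ W then φ e else 0) - if G.src e ∈ W then φ e else 0) := by
    simp only [divOf, Finset.sum_sub_distrib]
    rw [Finset.sum_comm, Finset.sum_comm (s := W)]
    simp
  have hedge : ∀ e, ((if G.tgt e ∈ W then φ e else 0) - if G.src e ∈ W then φ e else 0) =
      if G.crossing W e then G.inflow φ W e else 0 := by
    intro e
    unfold crossing inflow
    by_cases hs : G.src e ∈ W <;> by_cases ht : G.tgt e ∈ W <;> simp [hs, ht]
  rw [hsum, Finset.sum_filter]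
  exact Finset.sum_congr rfl fun e _ => hedge e

lemma le_inflow_of_closed {φ : G.E → ℤ} {t : ℤ} {W : Finset G.V}
    (hW : ∀ x : G.OEdge, G.osrc x ∈ W → t ≤ G.flowVal φ x → G.otgt x ∈ W) {e : G.E}
    (he : G.crossing W e) : 1 - t ≤ G.inflow φ W e := by
  unfold crossing at he
  unfold inflow
  by_cases ht : G.tgt e ∈ W
  · have hs : G.src e ∉ W := by simpa [ht] using he
    rw [if_pos ht]
    by_contra! hlt
    exact hs (hW (e, false) ht (by simp [flowVal]; omega))
  · have hs : G.src e ∈ W := by simpa [ht] using he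
    rw [if_neg ht]
    by_contra! hlt
    exact ht (hW (e, true) hs (by simp [flowVal]; omega))

lemma crossing_and_inflow_eq_flowVal {φ : G.E → ℤ} {W : Finset G.V} {x : G.OEdge}
    (hs : G.osrc x ∉ W) (ht : G.otgt x ∈ W) :
    G.crossing W x.1 ∧ G.inflow φ W x.1 = G.flowVal φ x := by
  rcases x with ⟨e, _ | _⟩ <;> simp_all [osrc, otgt, crossing, inflow, flowVal]

lemma le_sum_divOf_of_closed {φ : G.E → ℤ} {t : ℤ} {W : Finset G.V}
    (hW : ∀ x : G.OEdge, G.osrc x ∈ W → t ≤ G.flowVal φ x → G.otgt x ∈ W) {x : G.OEdge}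
    (hs : G.osrc x ∉ W) (ht : G.otgt x ∈ W) :
    (1 - t) * ((G.delta W : ℤ) - 1) + G.flowVal φ x ≤ ∑ v ∈ W, G.divOf φ v := by
  obtain ⟨hx, hx_flow⟩ := crossing_and_inflow_eq_flowVal (φ := φ) hs ht
  set S := univ.filter (fun e => G.crossing W e)
  have hxS : x.1 ∈ S := Finset.mem_filter.mpr ⟨Finset.mem_univ _, hx⟩
  have hcard : ((S.erase x.1).card : ℤ) = G.delta W - 1 := by
    have hδ : G.delta W = S.card := rfl
    have := Finset.card_erase_add_one hxS
    omega
  have hrest := Finset.card_nsmul_le_sum (S.erase x.1) (G.inflow φ W) (1 - t)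
    fun e he => le_inflow_of_closed hW (Finset.mem_filter.mp (Finset.mem_of_mem_erase he)).2
  rw [sum_divOf_eq_sum_inflow, ← Finset.add_sum_erase _ _ hxS, hx_flow]
  rw [nsmul_eq_mul, hcard] at hrest
  linarith

def reachSet (G : WGraph) (φ : G.E → ℤ) (t : ℤ) (v : G.V) : Finset G.V :=
  univ.filter (G.FlowReach φ t v)

lemma mem_reachSet {φ : G.E → ℤ} {t : ℤ} {u v : G.V} :
    u ∈ G.reachSet φ t v ↔ G.FlowReach φ t v u := by
  simp [reachSet]

lemma otgt_mem_reachSet {φ : G.E → ℤ} {t : ℤ} {v : G.V} {x : G.OEdge}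
    (hx : G.osrc x ∈ G.reachSet φ t v) (hxt : t ≤ G.flowVal φ x) :
    G.otgt x ∈ G.reachSet φ t v :=
  mem_reachSet.mpr ((mem_reachSet.mp hx).tail ⟨x, hxt, rfl, rfl⟩)

lemma Semistable.sum_K_sub_two_mul_le_delta {D : G.V → ℤ} (hss : G.Semistable G.canPol D)
    {W : Finset G.V} (hW : W ≠ univ) : ∑ v ∈ W, (G.K v - 2 * D v) ≤ G.delta W := by
  have h := hss W hW
  simp only [beta, canPol, ← Finset.sum_div] at h
  have : ((∑ v ∈ W, (G.K v - 2 * D v) : ℤ) : ℚ) ≤ G.delta W := by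
    push_cast
    rw [Finset.sum_sub_distrib, ← Finset.mul_sum]
    linarith
  exact_mod_cast this

lemma Acyclic.flowVal_le_one {φ : G.E → ℤ} {D : G.V → ℤ} (h : G.Acyclic φ)
    (hss : G.Semistable G.canPol D) (hφ : ∀ v, 2 * D v + G.divOf φ v = G.K v) (x : G.OEdge) :
    G.flowVal φ x ≤ 1 := by
  by_contra! hx
  set W := G.reachSet φ 0 (G.otgt x)
  have ht : G.otgt x ∈ W := mem_reachSet.mpr ReflTransGen.refl
  have hs : G.osrc x ∉ W := fun hs => h.not_flowReach (by omega) (mem_reachSet.mp hs)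
  have hlow := le_sum_divOf_of_closed (fun y hy => otgt_mem_reachSet hy) hs ht
  have hup := hss.sum_K_sub_two_mul_le_delta (W := W) fun hW => hs (hW ▸ Finset.mem_univ _)
  have hdiv : ∑ v ∈ W, G.divOf φ v = ∑ v ∈ W, (G.K v - 2 * D v) :=
    Finset.sum_congr rfl fun v _ => by linarith [hφ v]
  linarith

lemma exists_positive_cycle {ψ : G.E → ℤ} (hψ : ∀ v, G.divOf ψ v = 0) {x : G.OEdge}
    (hx : 1 ≤ G.flowVal ψ x) : ∃ γ, G.IsOrientedCycle γ ∧ ∀ y ∈ γ, 1 ≤ G.flowVal ψ y := by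
  -- otherwise `x` would enter the set reached from `otgt x` along edges with `ψ ≥ 1`,
  -- which no edge leaves with positive flow, against zero net inflow
  have hreach : G.FlowReach ψ 1 (G.otgt x) (G.osrc x) := by
    by_contra hs
    have hlow := le_sum_divOf_of_closed (W := G.reachSet ψ 1 (G.otgt x))
      (fun y hy => otgt_mem_reachSet hy) (fun h => hs (mem_reachSet.mp h))
      (mem_reachSet.mpr ReflTransGen.refl)
    simp only [hψ, Finset.sum_const_zero, sub_self, zero_mul, zero_add] at hlow
    omega
  obtain ⟨γ, hγ, -, hflow⟩ := exists_cycle_of_flowReach zero_le_one hx (by omega) hreach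
  exact ⟨γ, hγ, hflow⟩

end WGraph

theorem stmt4_general (G : WGraph) (D : G.V → ℤ)
    (hss : G.Semistable G.canPol D) (φ₁ φ₂ : G.E → ℤ)
    (h₁ : G.Acyclic φ₁) (heq₁ : ∀ v, 2 * D v + G.divOf φ₁ v = G.K v)
    (h₂ : G.Acyclic φ₂) (heq₂ : ∀ v, 2 * D v + G.divOf φ₂ v = G.K v) :
    φ₁ = φ₂ := by
  by_contra hne
  obtain ⟨e, he⟩ : ∃ e, (φ₁ - φ₂) e ≠ 0 := by
    by_contra! h
    exact hne (sub_eq_zero.mp (funext h))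
  have hdiv : ∀ v, G.divOf (φ₁ - φ₂) v = 0 := fun v => by
    rw [WGraph.divOf_sub]
    linarith [heq₁ v, heq₂ v]
  obtain ⟨x, hx⟩ := WGraph.exists_one_le_flowVal he
  obtain ⟨γ, hγ, hγ_pos⟩ := WGraph.exists_positive_cycle hdiv hx
  have hφ₂ : ∀ y, -1 ≤ G.flowVal φ₂ y := fun y =>
    neg_le.mp (by simpa using h₂.flowVal_le_one hss heq₂ (G.rev y))
  have hφ₁_nonneg : ∀ y ∈ γ, 0 ≤ G.flowVal φ₁ y := fun y hy => by
    linarith [hγ_pos y hy, WGraph.flowVal_sub φ₁ φ₂ y, hφ₂ y]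
  have hφ₁_zero : ∀ y ∈ γ, G.flowVal φ₁ y = 0 := fun y hy =>
    le_antisymm (not_lt.mp fun hpos => h₁ ⟨γ, hγ, hφ₁_nonneg, y, hy, hpos⟩) (hφ₁_nonneg y hy)
  have hφ₂_neg : ∀ y ∈ γ, G.flowVal φ₂ y ≤ -1 := fun y hy => by
    linarith [hγ_pos y hy, WGraph.flowVal_sub φ₁ φ₂ y, hφ₁_zero y hy]
  exact h₂.not_exists_negative_cycle ⟨γ, hγ, fun y hy => (hφ₂_neg y hy).trans (by norm_num),
    γ.head hγ.1, List.head_mem _, by linarith [hφ₂_neg _ (List.head_mem hγ.1)]⟩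

/-- For a semistable divisor `D` on a connected graph
(canonical polarization of degree `g-1`) there is at most one acyclic flow
`φ` with `2D + Div(φ) = K_Γ`. -/
theorem stmt4 (G : WGraph) (hconn : G.Connected) (D : G.V → ℤ)
    (hss : G.Semistable G.canPol D) (φ₁ φ₂ : G.E → ℤ)
    (h₁ : G.Acyclic φ₁) (heq₁ : ∀ v, 2 * D v + G.divOf φ₁ v = G.K v)
    (h₂ : G.Acyclic φ₂) (heq₂ : ∀ v, 2 * D v + G.divOf φ₂ v = G.K v) :
    φ₁ = φ₂ :=
  stmt4_general G D hss φ₁ φ₂ h₁ heq₁ h₂ heq₂
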